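/- Let γ ≥ 0 be an integer and let S be a γ-hyperelliptic numerical semigroup of genus g with g ≥ 2γ+1. Then the K-weight of S satisfies W_K ≤ C(g-2γ, 2) + 2γ², where C(n,2) denotes the binomial coefficient n choose 2. -/

import Mathlib

/-- A numerical semigroup: a subset of ℕ containing 0, closed under addition,
with finite complement. -/
def IsNumericalSemigroup (S : Set ℕ) : Prop :=
  0 ∈ S ∧ (∀ a ∈ S, ∀ b ∈ S, a + b ∈ S) ∧ Sᶜ.Finite

/-- The genus of `S`: the number of gaps (elements of ℕ not in `S`). -/
noncomputable def genus (S : Set ℕ) : ℕ := Sᶜ.ncard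

/-- `gap S i` is the `(i+1)`-st smallest gap of `S`, i.e. `ℓ_{i+1}` (0-indexed). -/
noncomputable def gap (S : Set ℕ) (i : ℕ) : ℕ := Nat.nth (fun n => n ∉ S) i

/-- The K-weight of `S`: `W_K = Σ_{i=1}^{g-1} (ℓ_i - i) + g - 1`. -/
noncomputable def Kweight (S : Set ℕ) : ℕ :=
  (∑ i ∈ Finset.range (genus S - 1), (gap S i - (i + 1))) + genus S - 1

/-- The S-weight of `S`: `W_S = Σ_{i=1}^{g} (ℓ_i - i)`. -/
noncomputable def Sweight (S : Set ℕ) : ℕ :=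
  ∑ i ∈ Finset.range (genus S), (gap S i - (i + 1))

/-- `S` is γ-hyperelliptic: it has exactly γ even elements in `[2, 4γ]`, and the
`(γ+1)`-st smallest positive element of `S` is `4γ+2`. -/
def GammaHyperelliptic (γ : ℕ) (S : Set ℕ) : Prop :=
  {n | n ∈ Set.Icc 2 (4 * γ) ∧ Even n ∧ n ∈ S}.ncard = γ ∧
  Nat.nth (fun n => n ∈ S ∧ n ≠ 0) γ = 4 * γ + 2

/-!
The γ-hyperelliptic conditions force every odd number below `4γ + 2` to be a gap and every even
gap to be at most `4γ`, so there are exactly `γ` even gaps and the Frobenius number `F` is odd.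
Since `W_K + F + 1 = W_S + 2g` and `W_S` counts the pairs (gap `ℓ`, positive element below `ℓ`),
it suffices to bound these pairs. For an even gap `ε`, reflection `x ↦ ε - x` bounds them by the
even gaps below `ε`. For an odd gap `μ`, the even and odd numbers in `(0, μ)` are equinumerous,
which trades the even elements below `μ` for odd gaps and odd elements below `μ`. Finally, a pair
(odd gap `μ`, odd element `s < μ`) is sent injectively to the pair of even gaps `(F - s, μ - s)`
with `μ - s ≤ F - s`, so there are at most `γ r - C(r, 2)` of them, where `r ≤ γ` is the number
of odd elements below `F`; the rest is arithmetic.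
-/

open Finset
open scoped Classical

section Counting

theorem card_filter_even_range (n : ℕ) : #{x ∈ range n | Even x} = (n + 1) / 2 := by
  induction n with
  | zero => rfl
  | succ n ih =>
    rw [range_add_one, filter_insert]
    split_ifs with h
    · rw [card_insert_of_notMem (by simp), ih]
      obtain ⟨k, rfl⟩ := h
      omega
    · rw [ih]
      obtain ⟨k, rfl⟩ := Nat.not_even_iff_odd.mp h
      omega

theorem card_filter_not_even_range (n : ℕ) : #{x ∈ range n | ¬Even x} = n / 2 := by
  have := card_filter_add_card_filter_not (s := range n) (fun x => Even x)
  rw [card_filter_even_range, card_range] at this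
  omega

theorem card_filter_and_add_card_filter_and_not (s : Finset ℕ) (p q : ℕ → Prop)
    [DecidablePred p] [DecidablePred q] :
    #{x ∈ s | p x ∧ q x} + #{x ∈ s | p x ∧ ¬q x} = #{x ∈ s | p x} := by
  rw [← filter_filter, ← filter_filter]
  exact card_filter_add_card_filter_not _

theorem card_filter_and_add_card_filter_not_and (s : Finset ℕ) (p q : ℕ → Prop)
    [DecidablePred p] [DecidablePred q] :
    #{x ∈ s | q x ∧ p x} + #{x ∈ s | ¬q x ∧ p x} = #{x ∈ s | p x} := by
  simp only [and_comm (b := p _)]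
  exact card_filter_and_add_card_filter_and_not s p q

theorem two_mul_choose_two_add_self (n : ℕ) : 2 * n.choose 2 + n = n * n := by
  induction n with
  | zero => rfl
  | succ n ih => rw [Nat.choose_succ_succ, Nat.choose_one_right]; nlinarith

theorem card_le_card_of_sub_mem {s t : Finset ℕ} {m : ℕ} (hle : ∀ x ∈ s, x ≤ m)
    (hmem : ∀ x ∈ s, m - x ∈ t) : #s ≤ #t :=
  card_le_card_of_injOn (m - ·) hmem fun x hx y hy hxy => by
    have := hle x hx; have := hle y hy; simp only at hxy; omega

theorem sum_card_filter_lt_self (s : Finset ℕ) :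
    ∑ x ∈ s, #{y ∈ s | y < x} = (#s).choose 2 := by
  induction s using Finset.induction_on_max with
  | empty => simp
  | insert a s ha ih =>
    have has : a ∉ s := fun h => lt_irrefl a (ha a h)
    have hlt_a : {y ∈ insert a s | y < a} = s := by
      ext y; simp only [mem_filter, mem_insert]; grind
    have hlt_x : ∀ x ∈ s, {y ∈ insert a s | y < x} = {y ∈ s | y < x} := by
      intro x hx; ext y; simp only [mem_filter, mem_insert]; grind
    rw [sum_insert has, hlt_a, sum_congr rfl fun x hx => by rw [hlt_x x hx], ih,
      card_insert_of_notMem has, Nat.choose_succ_succ, Nat.choose_one_right, add_comm]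

theorem sum_card_filter_lt_comm (s t : Finset ℕ) :
    ∑ y ∈ t, #{x ∈ s | x < y} = ∑ x ∈ s, #{y ∈ t | x < y} := by
  simp only [card_filter]
  exact sum_comm

theorem sum_card_filter_lt_add_sum_card_filter_lt {s t : Finset ℕ} (h : Disjoint s t) :
    ∑ y ∈ t, #{x ∈ s | x < y} + ∑ x ∈ s, #{y ∈ t | y < x} = #s * #t := by
  rw [sum_card_filter_lt_comm, ← sum_add_distrib, ← smul_eq_mul, ← sum_const]
  refine sum_congr rfl fun x hx => ?_
  rw [← card_union_of_disjoint (disjoint_filter.mpr fun y _ h1 h2 => lt_asymm h1 h2)]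
  congr 1
  ext y
  have : y ∈ t → x ≠ y := fun hy hxy => disjoint_left.mp h hx (hxy ▸ hy)
  simp only [mem_union, mem_filter]
  grind

theorem sum_card_filter_le_add_choose_two_le {s t : Finset ℕ} (h : s ⊆ t) :
    ∑ x ∈ s, #{y ∈ t | y ≤ x} + (#s).choose 2 ≤ #s * #t := by
  have hx : ∀ x ∈ s, #{y ∈ t | y ≤ x} ≤ #{y ∈ s | y < x} + 1 + (#t - #s) := by
    intro x hx
    calc #{y ∈ t | y ≤ x} ≤ #(insert x {y ∈ s | y < x} ∪ (t \ s)) := by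
          refine card_le_card fun y hy => ?_
          simp only [mem_filter, mem_union, mem_insert, mem_sdiff] at hy ⊢
          grind
      _ ≤ #{y ∈ s | y < x} + 1 + (#t - #s) := by
          grw [card_union_le, card_insert_le, card_sdiff_of_subset h]
  have hsum := sum_le_sum hx
  rw [sum_add_distrib, sum_add_distrib, sum_card_filter_lt_self, sum_const, sum_const,
    smul_eq_mul, smul_eq_mul, mul_one] at hsum
  have hchoose := two_mul_choose_two_add_self #s
  have : #s ≤ #t := card_le_card h
  nlinarith [Nat.sub_add_cancel this]

-- `(γ - r) ≤ (γ - r) ^ 2` in disguise.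
theorem three_mul_choose_two_add_choose_two_le {γ o r : ℕ} (hr : r ≤ γ) (ho : γ ≤ o) :
    3 * γ.choose 2 + o.choose 2 + 3 * γ + 2 * (r * γ) ≤
      (o - γ).choose 2 + 2 * γ ^ 2 + γ * o + 2 * r.choose 2 + 2 * r := by
  obtain ⟨d, rfl⟩ : ∃ d, γ = r + d := ⟨γ - r, by omega⟩
  obtain ⟨n, rfl⟩ : ∃ n, o = r + d + n := ⟨o - (r + d), by omega⟩
  rw [Nat.add_sub_cancel_left]
  have := two_mul_choose_two_add_self (r + d)
  have := two_mul_choose_two_add_self (r + d + n)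
  have := two_mul_choose_two_add_self r
  have := two_mul_choose_two_add_self n
  have := Nat.le_mul_self d
  nlinarith

end Counting

section Gaps

variable {S : Set ℕ}

theorem IsNumericalSemigroup.sub_notMem (hS : IsNumericalSemigroup S) {x y : ℕ} (hx : x ∈ S)
    (hy : y ∉ S) (hxy : x ≤ y) : y - x ∉ S := fun h =>
  hy (Nat.add_sub_cancel' hxy ▸ hS.2.1 x hx (y - x) h)

theorem IsNumericalSemigroup.infinite_setOf_mem_ne_zero (hS : IsNumericalSemigroup S) :
    {n | n ∈ S ∧ n ≠ 0}.Infinite := by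
  have hfin : (Sᶜ ∪ {0}).Finite := hS.2.2.union (Set.finite_singleton 0)
  convert hfin.infinite_compl using 1
  ext n
  simp [and_comm]

theorem card_filter_mem_range_eq_add_one (h0 : 0 ∈ S) {m : ℕ} (hm : 0 < m) :
    #{x ∈ range m | x ∈ S} = #{x ∈ range m | x ∈ S ∧ x ≠ 0} + 1 := by
  rw [← card_filter_and_add_card_filter_and_not _ _ (· ≠ 0)]
  congr 1
  rw [card_eq_one]
  exact ⟨0, by ext x; simp only [mem_filter, mem_range, mem_singleton]; grind⟩

theorem genus_eq_card {L : Finset ℕ} (hL : ∀ x, x ∈ L ↔ x ∉ S) : genus S = #L := by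
  rw [genus, ← Set.ncard_coe_finset]
  congr
  ext x
  simp [hL]

theorem lt_card_toFinset_of_lt_genus {i : ℕ} (hi : i < genus S) :
    ∀ hf : (Set.ofPred (· ∉ S)).Finite, i < #hf.toFinset := fun hf => by
  rw [← Set.ncard_eq_toFinset_card _ hf]
  exact hi

theorem gap_notMem {i : ℕ} (hi : i < genus S) : gap S i ∉ S :=
  Nat.nth_mem i (lt_card_toFinset_of_lt_genus hi)

theorem gap_eq_card_add (h0 : 0 ∈ S) {i : ℕ} (hi : i < genus S) :
    gap S i = #{x ∈ range (gap S i) | x ∈ S ∧ x ≠ 0} + (i + 1) := by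
  have hcount : #{x ∈ range (gap S i) | x ∉ S} = i := by
    rw [← Nat.count_eq_card_filter_range]
    exact Nat.count_nth (lt_card_toFinset_of_lt_genus hi)
  have hpos : 0 < gap S i := Nat.pos_of_ne_zero fun h => gap_notMem hi (h ▸ h0)
  have := card_filter_add_card_filter_not (s := range (gap S i)) (· ∈ S)
  rw [card_range, card_filter_mem_range_eq_add_one h0 hpos, hcount] at this
  omega

theorem count_lt_genus (hfin : Sᶜ.Finite) {x : ℕ} (hx : x ∉ S) :
    Nat.count (· ∉ S) x < genus S := by
  rw [genus, Set.ncard_eq_toFinset_card _ hfin]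
  exact Nat.count_lt_card (p := (· ∉ S)) hfin hx

theorem le_gap_genus_sub_one (hfin : Sᶜ.Finite) {x : ℕ} (hx : x ∉ S) :
    x ≤ gap S (genus S - 1) := by
  have hlt := count_lt_genus hfin hx
  calc x = Nat.nth (· ∉ S) (Nat.count (· ∉ S) x) := (Nat.nth_count (p := (· ∉ S)) hx).symm
    _ ≤ gap S (genus S - 1) :=
      Nat.nth_le_nth' (by omega) (lt_card_toFinset_of_lt_genus (by omega))

theorem Sweight_eq_sum (h0 : 0 ∈ S) {L : Finset ℕ} (hL : ∀ x, x ∈ L ↔ x ∉ S) :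
    Sweight S = ∑ ℓ ∈ L, #{x ∈ range ℓ | x ∈ S ∧ x ≠ 0} := by
  rw [Sweight]
  refine sum_nbij' (gap S) (Nat.count (· ∉ S)) (fun i hi => ?_) (fun ℓ hℓ => ?_)
    (fun i hi => ?_) (fun ℓ hℓ => Nat.nth_count (p := (· ∉ S)) ((hL ℓ).mp hℓ)) (fun i hi => ?_)
  · exact (hL _).mpr (gap_notMem (mem_range.mp hi))
  · exact mem_range.mpr (count_lt_genus (L.finite_toSet.subset fun x hx => (hL x).mpr hx)
      ((hL ℓ).mp hℓ))
  · exact Nat.count_nth (lt_card_toFinset_of_lt_genus (mem_range.mp hi))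
  · have := gap_eq_card_add h0 (mem_range.mp hi)
    omega

theorem isGreatest_gap_genus_sub_one (hfin : Sᶜ.Finite) (hg : 0 < genus S) :
    IsGreatest Sᶜ (gap S (genus S - 1)) :=
  ⟨gap_notMem (by omega), fun _ hx => le_gap_genus_sub_one hfin hx⟩

theorem Kweight_add_eq (h0 : 0 ∈ S) (hfin : Sᶜ.Finite) {F : ℕ} (hF : IsGreatest Sᶜ F) :
    Kweight S + F + 1 = Sweight S + 2 * genus S := by
  have hg : 0 < genus S := by have := count_lt_genus hfin hF.1; omega
  have hlast := gap_eq_card_add h0 (Nat.sub_one_lt_of_lt hg)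
  rw [hF.unique (isGreatest_gap_genus_sub_one hfin hg)]
  obtain ⟨k, hk⟩ : ∃ k, genus S = k + 1 := ⟨genus S - 1, by omega⟩
  rw [hk, Nat.add_sub_cancel] at hlast ⊢
  rw [Kweight, Sweight, hk, sum_range_succ, Nat.add_sub_cancel]
  omega

end Gaps

section Parity

variable {S : Set ℕ}

theorem IsNumericalSemigroup.le_four_mul_card_even_gaps_add_two (hS : IsNumericalSemigroup S)
    {ε : ℕ} (hε : ε ∉ S) (he : Even ε) :
    ε ≤ 4 * #{x ∈ range ε | Even x ∧ x ∉ S} + 2 := by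
  have hreflect : #{x ∈ range ε | Even x ∧ x ∈ S} ≤
      #(insert ε {x ∈ range ε | Even x ∧ x ∉ S}) := by
    refine card_le_card_of_sub_mem (m := ε) (fun x hx => ?_) (fun x hx => ?_)
    · exact (mem_range.mp (mem_filter.mp hx).1).le
    · simp only [mem_filter, mem_range, mem_insert] at hx ⊢
      obtain ⟨hxε, hxe, hxS⟩ := hx
      rcases Nat.eq_zero_or_pos x with rfl | hx0
      · exact Or.inl rfl
      · exact Or.inr ⟨by omega, (Nat.even_sub hxε.le).mpr (iff_of_true he hxe),
          hS.sub_notMem hxS hε hxε.le⟩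
  have hsplit := card_filter_and_add_card_filter_and_not (range ε) Even (· ∈ S)
  rw [card_filter_even_range] at hsplit
  have := card_insert_le ε {x ∈ range ε | Even x ∧ x ∉ S}
  obtain ⟨k, rfl⟩ := he
  omega

theorem card_pos_add_card_even_gaps_eq (h0 : 0 ∈ S) {μ : ℕ} (hμ : ¬Even μ) :
    #{x ∈ range μ | x ∈ S ∧ x ≠ 0} + #{x ∈ range μ | Even x ∧ x ∉ S} =
      #{x ∈ range μ | ¬Even x ∧ x ∉ S} + 2 * #{x ∈ range μ | ¬Even x ∧ x ∈ S} := by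
  -- Both sides are `#{x ∈ range μ | ¬Even x ∧ x ∈ S}` plus the number of even, resp. odd,
  -- numbers in `(0, μ)`, and these agree because `μ` is odd.
  have hμ0 : 0 < μ := Nat.pos_of_ne_zero fun h => hμ (h ▸ Even.zero)
  have hS := card_filter_mem_range_eq_add_one h0 hμ0
  have hSsplit := card_filter_and_add_card_filter_not_and (range μ) (· ∈ S) Even
  have hEven := card_filter_and_add_card_filter_and_not (range μ) Even (· ∈ S)
  have hOdd := card_filter_and_add_card_filter_and_not (range μ) (¬Even ·) (· ∈ S)
  rw [card_filter_even_range] at hEven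
  rw [card_filter_not_even_range] at hOdd
  obtain ⟨k, rfl⟩ := Nat.not_even_iff_odd.mp hμ
  omega

theorem filter_filter_lt_eq_filter_range {L : Finset ℕ} (hL : ∀ x, x ∈ L ↔ x ∉ S)
    (P : ℕ → Prop) [DecidablePred P] (m : ℕ) :
    {y ∈ {x ∈ L | P x} | y < m} = {x ∈ range m | P x ∧ x ∉ S} := by
  ext x
  simp only [mem_filter, mem_range, hL]
  tauto

end Parity

section OddFrobenius

variable {S : Set ℕ} {L : Finset ℕ} {F : ℕ}

theorem add_one_eq_two_mul_card_odd (hL : ∀ x, x ∈ L ↔ x ∉ S) (hF : IsGreatest Sᶜ F)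
    (hFodd : ¬Even F) :
    F + 1 = 2 * (#{x ∈ L | ¬Even x} + #{x ∈ range F | ¬Even x ∧ x ∈ S}) := by
  have hunion : {x ∈ range (F + 1) | ¬Even x} =
      {x ∈ L | ¬Even x} ∪ {x ∈ range F | ¬Even x ∧ x ∈ S} := by
    ext x
    simp only [mem_filter, mem_range, mem_union, hL]
    constructor
    · rintro ⟨hx, hxo⟩
      by_cases hxS : x ∈ S
      · exact Or.inr ⟨lt_of_le_of_ne (Nat.le_of_lt_succ hx) (by rintro rfl; exact hF.1 hxS),
          hxo, hxS⟩
      · exact Or.inl ⟨hxS, hxo⟩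
    · rintro (⟨hxS, hxo⟩ | ⟨hx, hxo, -⟩)
      · exact ⟨Nat.lt_succ_of_le (hF.2 hxS), hxo⟩
      · exact ⟨by omega, hxo⟩
  have hdisj : Disjoint {x ∈ L | ¬Even x} {x ∈ range F | ¬Even x ∧ x ∈ S} :=
    disjoint_left.mpr fun x hxL hxR => (hL x).mp (mem_filter.mp hxL).1 (mem_filter.mp hxR).2.2
  have hcard := card_filter_not_even_range (F + 1)
  rw [hunion, card_union_of_disjoint hdisj] at hcard
  obtain ⟨k, rfl⟩ := Nat.not_even_iff_odd.mp hFodd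
  omega

theorem sub_mem_filter_even (hS : IsNumericalSemigroup S) (hL : ∀ x, x ∈ L ↔ x ∉ S)
    (hF : F ∉ S) (hFodd : ¬Even F) :
    ∀ x ∈ {x ∈ range F | ¬Even x ∧ x ∈ S}, F - x ∈ {x ∈ L | Even x} := by
  intro x hx
  simp only [mem_filter, mem_range] at hx
  obtain ⟨hxF, hxo, hxS⟩ := hx
  rw [mem_filter, hL]
  exact ⟨hS.sub_notMem hxS hF hxF.le, (Nat.even_sub hxF.le).mpr (iff_of_false hFodd hxo)⟩

theorem sum_card_odd_mem_lt_add_choose_two_le (hS : IsNumericalSemigroup S)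
    (hL : ∀ x, x ∈ L ↔ x ∉ S) (hF : IsGreatest Sᶜ F) (hFodd : ¬Even F) :
    ∑ μ ∈ {x ∈ L | ¬Even x}, #{s ∈ {x ∈ range F | ¬Even x ∧ x ∈ S} | s < μ} +
        (#{x ∈ range F | ¬Even x ∧ x ∈ S}).choose 2 ≤
      #{x ∈ range F | ¬Even x ∧ x ∈ S} * #{x ∈ L | Even x} := by
  set R := {x ∈ range F | ¬Even x ∧ x ∈ S}
  set E := {x ∈ L | Even x}
  have hshift : ∀ s ∈ R, #{μ ∈ {x ∈ L | ¬Even x} | s < μ} ≤ #{e ∈ E | e ≤ F - s} := by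
    intro s hs
    simp only [R, mem_filter, mem_range] at hs
    obtain ⟨hsF, hso, hsS⟩ := hs
    refine card_le_card_of_injOn (· - s) (fun μ hμ => ?_) (fun μ hμ ν hν h => ?_)
    · simp only [coe_filter, mem_filter, Set.mem_ofPred_eq, hL] at hμ
      obtain ⟨⟨hμS, hμo⟩, hsμ⟩ := hμ
      have := hF.2 hμS
      simp only [E, coe_filter, mem_filter, Set.mem_ofPred_eq, hL]
      exact ⟨⟨hS.sub_notMem hsS hμS hsμ.le, (Nat.even_sub hsμ.le).mpr (iff_of_false hμo hso)⟩,
        by omega⟩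
    · simp only [coe_filter, mem_filter, Set.mem_ofPred_eq] at hμ hν h
      omega
  have hinj : Set.InjOn (F - ·) R := fun x hx y hy hxy => by
    simp only [R, coe_filter, mem_range, Set.mem_ofPred_eq] at hx hy hxy
    omega
  have hcard : #(R.image (F - ·)) = #R := card_image_of_injOn hinj
  calc ∑ μ ∈ {x ∈ L | ¬Even x}, #{s ∈ R | s < μ} + (#R).choose 2
      = ∑ s ∈ R, #{μ ∈ {x ∈ L | ¬Even x} | s < μ} + (#(R.image (F - ·))).choose 2 := by
        rw [sum_card_filter_lt_comm, hcard]
    _ ≤ ∑ e ∈ R.image (F - ·), #{y ∈ E | y ≤ e} + (#(R.image (F - ·))).choose 2 := by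
        rw [sum_image hinj]
        exact Nat.add_le_add_right (sum_le_sum hshift) _
    _ ≤ #(R.image (F - ·)) * #E :=
        sum_card_filter_le_add_choose_two_le
          (image_subset_iff.mpr (sub_mem_filter_even hS hL hF.1 hFodd))
    _ = #R * #E := by rw [hcard]

theorem sum_odd_gaps_card_pos_lt_add (h0 : 0 ∈ S) (hL : ∀ x, x ∈ L ↔ x ∉ S)
    (hF : F ∈ upperBounds Sᶜ) :
    ∑ μ ∈ {x ∈ L | ¬Even x}, #{x ∈ range μ | x ∈ S ∧ x ≠ 0} +
        ∑ μ ∈ {x ∈ L | ¬Even x}, #{y ∈ {x ∈ L | Even x} | y < μ} =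
      (#{x ∈ L | ¬Even x}).choose 2 +
        2 * ∑ μ ∈ {x ∈ L | ¬Even x}, #{s ∈ {x ∈ range F | ¬Even x ∧ x ∈ S} | s < μ} := by
  rw [← sum_add_distrib, ← sum_card_filter_lt_self, mul_sum, ← sum_add_distrib]
  refine sum_congr rfl fun μ hμ => ?_
  rw [mem_filter, hL] at hμ
  have hR : {s ∈ {x ∈ range F | ¬Even x ∧ x ∈ S} | s < μ} = {x ∈ range μ | ¬Even x ∧ x ∈ S} := by
    ext x
    have := hF hμ.1
    simp only [mem_filter, mem_range]
    constructor
    · rintro ⟨⟨-, h⟩, hx⟩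
      exact ⟨hx, h⟩
    · rintro ⟨hx, h⟩
      exact ⟨⟨by omega, h⟩, hx⟩
  rw [filter_filter_lt_eq_filter_range hL, filter_filter_lt_eq_filter_range hL, hR]
  exact card_pos_add_card_even_gaps_eq h0 hμ.2

end OddFrobenius

namespace GammaHyperelliptic

variable {γ : ℕ} {S : Set ℕ}

theorem card_filter_even_mem_Icc (hγ : GammaHyperelliptic γ S) :
    #{x ∈ Icc 2 (4 * γ) | Even x ∧ x ∈ S} = γ := by
  rw [← Set.ncard_coe_finset]
  convert hγ.1 using 2
  ext x
  simp

theorem card_filter_pos_mem_range (hS : IsNumericalSemigroup S) (hγ : GammaHyperelliptic γ S) :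
    #{x ∈ range (4 * γ + 2) | x ∈ S ∧ x ≠ 0} = γ := by
  rw [← Nat.count_eq_card_filter_range, ← hγ.2]
  exact Nat.count_nth_of_infinite hS.infinite_setOf_mem_ne_zero γ

theorem four_mul_add_two_mem (hS : IsNumericalSemigroup S) (hγ : GammaHyperelliptic γ S) :
    4 * γ + 2 ∈ S := by
  have := Nat.nth_mem_of_infinite hS.infinite_setOf_mem_ne_zero γ
  rw [hγ.2] at this
  exact this.1

theorem notMem_of_not_even_of_lt (hS : IsNumericalSemigroup S) (hγ : GammaHyperelliptic γ S)
    {x : ℕ} (hx : ¬Even x) (hlt : x < 4 * γ + 2) : x ∉ S := by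
  intro hxS
  have hsub : {x ∈ Icc 2 (4 * γ) | Even x ∧ x ∈ S} ⊆ {x ∈ range (4 * γ + 2) | x ∈ S ∧ x ≠ 0} := by
    intro y hy
    simp only [mem_filter, mem_Icc, mem_range] at hy ⊢
    exact ⟨by omega, hy.2.2, by omega⟩
  have heq := eq_of_subset_of_card_le hsub
    (by rw [card_filter_pos_mem_range hS hγ, card_filter_even_mem_Icc hγ])
  have hxmem : x ∈ {x ∈ range (4 * γ + 2) | x ∈ S ∧ x ≠ 0} := by
    simp only [mem_filter, mem_range]
    exact ⟨hlt, hxS, by rintro rfl; exact hx Even.zero⟩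
  rw [← heq, mem_filter] at hxmem
  exact hx hxmem.2.1

theorem card_filter_even_gaps_range (hS : IsNumericalSemigroup S) (hγ : GammaHyperelliptic γ S) :
    #{x ∈ range (4 * γ + 2) | Even x ∧ x ∉ S} = γ := by
  have hmem : {x ∈ range (4 * γ + 2) | Even x ∧ x ∈ S} =
      insert 0 {x ∈ Icc 2 (4 * γ) | Even x ∧ x ∈ S} := by
    ext x
    simp only [mem_filter, mem_range, mem_insert, mem_Icc]
    constructor
    · rintro ⟨hx, ⟨k, rfl⟩, hxS⟩
      rcases Nat.eq_zero_or_pos k with rfl | hk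
      · exact Or.inl rfl
      · exact Or.inr ⟨⟨by omega, by omega⟩, ⟨k, rfl⟩, hxS⟩
    · rintro (rfl | ⟨⟨-, hx⟩, he, hxS⟩)
      · exact ⟨by omega, Even.zero, hS.1⟩
      · exact ⟨by omega, he, hxS⟩
  have hsplit := card_filter_and_add_card_filter_and_not (range (4 * γ + 2)) Even (· ∈ S)
  rw [hmem, card_insert_of_notMem (by simp), card_filter_even_mem_Icc hγ,
    card_filter_even_range] at hsplit
  omega

theorem le_four_mul_of_even_gap (hS : IsNumericalSemigroup S) (hγ : GammaHyperelliptic γ S)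
    {ε : ℕ} (hε : ε ∉ S) (he : Even ε) : ε ≤ 4 * γ := by
  induction ε using Nat.strong_induction_on with
  | _ ε ih =>
    have hsub : {x ∈ range ε | Even x ∧ x ∉ S} ⊆ {x ∈ range (4 * γ + 2) | Even x ∧ x ∉ S} := by
      intro x hx
      simp only [mem_filter, mem_range] at hx ⊢
      have := ih x hx.1 hx.2.2 hx.2.1
      exact ⟨by omega, hx.2⟩
    have hbound := hS.le_four_mul_card_even_gaps_add_two hε he
    have hcard := card_le_card hsub
    rw [card_filter_even_gaps_range hS hγ] at hcard
    have hne : ε ≠ 4 * γ + 2 := fun h => hε (h ▸ four_mul_add_two_mem hS hγ)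
    obtain ⟨k, rfl⟩ := he
    omega

variable {L : Finset ℕ}

theorem card_filter_even (hS : IsNumericalSemigroup S) (hγ : GammaHyperelliptic γ S)
    (hL : ∀ x, x ∈ L ↔ x ∉ S) : #{x ∈ L | Even x} = γ := by
  rw [← card_filter_even_gaps_range hS hγ]
  congr 1
  ext x
  simp only [mem_filter, mem_range, hL]
  constructor
  · rintro ⟨hxS, he⟩
    exact ⟨by have := le_four_mul_of_even_gap hS hγ hxS he; omega, he, hxS⟩
  · rintro ⟨-, he, hxS⟩
    exact ⟨hxS, he⟩

theorem not_even_of_isGreatest (hS : IsNumericalSemigroup S) (hγ : GammaHyperelliptic γ S)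
    {F : ℕ} (hF : IsGreatest Sᶜ F) : ¬Even F := fun he => by
  have h1 := le_four_mul_of_even_gap hS hγ hF.1 he
  have h2 : 4 * γ + 1 ≤ F := hF.2 (notMem_of_not_even_of_lt hS hγ
    (Nat.not_even_iff_odd.mpr ⟨2 * γ, by ring⟩) (by omega))
  omega

theorem sum_even_gaps_card_pos_lt_le (hS : IsNumericalSemigroup S)
    (hγ : GammaHyperelliptic γ S) (hL : ∀ x, x ∈ L ↔ x ∉ S) :
    ∑ ε ∈ {x ∈ L | Even x}, #{x ∈ range ε | x ∈ S ∧ x ≠ 0} ≤ γ.choose 2 := by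
  rw [← card_filter_even hS hγ hL, ← sum_card_filter_lt_self]
  refine sum_le_sum fun ε hε => ?_
  rw [mem_filter, hL] at hε
  obtain ⟨hεS, hεe⟩ := hε
  have hε4 := le_four_mul_of_even_gap hS hγ hεS hεe
  rw [filter_filter_lt_eq_filter_range hL]
  refine card_le_card_of_sub_mem (m := ε) (fun x hx => ?_) (fun x hx => ?_)
  · exact (mem_range.mp (mem_filter.mp hx).1).le
  · simp only [mem_filter, mem_range] at hx ⊢
    obtain ⟨hxε, hxS, hx0⟩ := hx
    have hxe : Even x := by
      by_contra hxo
      exact notMem_of_not_even_of_lt hS hγ hxo (by omega) hxS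
    exact ⟨by omega, (Nat.even_sub hxε.le).mpr (iff_of_true hεe hxe),
      hS.sub_notMem hxS hεS hxε.le⟩

theorem sum_even_gaps_card_odd_gaps_lt_le (hS : IsNumericalSemigroup S)
    (hγ : GammaHyperelliptic γ S) (hL : ∀ x, x ∈ L ↔ x ∉ S) :
    ∑ ε ∈ {x ∈ L | Even x}, #{y ∈ {x ∈ L | ¬Even x} | y < ε} ≤ 2 * γ.choose 2 + γ := by
  have hε : ∀ ε ∈ {x ∈ L | Even x}, #{y ∈ {x ∈ L | ¬Even x} | y < ε} ≤
      2 * #{y ∈ {x ∈ L | Even x} | y < ε} + 1 := by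
    intro ε hε
    rw [mem_filter, hL] at hε
    obtain ⟨hεS, hεe⟩ := hε
    have hε4 := le_four_mul_of_even_gap hS hγ hεS hεe
    have hodd : {x ∈ range ε | ¬Even x ∧ x ∉ S} = {x ∈ range ε | ¬Even x} := by
      refine filter_congr fun x hx => and_iff_left_of_imp fun hxo => ?_
      exact notMem_of_not_even_of_lt hS hγ hxo (by rw [mem_range] at hx; omega)
    have hbound := hS.le_four_mul_card_even_gaps_add_two hεS hεe
    rw [filter_filter_lt_eq_filter_range hL, filter_filter_lt_eq_filter_range hL, hodd,
      card_filter_not_even_range]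
    omega
  calc ∑ ε ∈ {x ∈ L | Even x}, #{y ∈ {x ∈ L | ¬Even x} | y < ε}
      ≤ ∑ ε ∈ {x ∈ L | Even x}, (2 * #{y ∈ {x ∈ L | Even x} | y < ε} + 1) := sum_le_sum hε
    _ = 2 * γ.choose 2 + γ := by
      rw [sum_add_distrib, ← mul_sum, sum_card_filter_lt_self, card_filter_even hS hγ hL,
        sum_const, smul_eq_mul, mul_one, card_filter_even hS hγ hL]

theorem sum_card_pos_lt_add_le (hS : IsNumericalSemigroup S) (hγ : GammaHyperelliptic γ S)
    (hL : ∀ x, x ∈ L ↔ x ∉ S) {F : ℕ} (hF : IsGreatest Sᶜ F) :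
    ∑ ℓ ∈ L, #{x ∈ range ℓ | x ∈ S ∧ x ≠ 0} + γ * #{x ∈ L | ¬Even x} +
        2 * (#{x ∈ range F | ¬Even x ∧ x ∈ S}).choose 2 ≤
      3 * γ.choose 2 + (#{x ∈ L | ¬Even x}).choose 2 + γ +
        2 * (#{x ∈ range F | ¬Even x ∧ x ∈ S} * γ) := by
  have hpairs : ∑ μ ∈ {x ∈ L | ¬Even x}, #{y ∈ {x ∈ L | Even x} | y < μ} +
      ∑ ε ∈ {x ∈ L | Even x}, #{y ∈ {x ∈ L | ¬Even x} | y < ε} =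
        #{x ∈ L | Even x} * #{x ∈ L | ¬Even x} :=
    sum_card_filter_lt_add_sum_card_filter_lt (disjoint_filter.mpr fun _ _ he ho => ho he)
  have hodd := sum_card_odd_mem_lt_add_choose_two_le hS hL hF (not_even_of_isGreatest hS hγ hF)
  rw [card_filter_even hS hγ hL] at hpairs hodd
  rw [← sum_filter_add_sum_filter_not L Even]
  have := sum_even_gaps_card_pos_lt_le hS hγ hL
  have := sum_even_gaps_card_odd_gaps_lt_le hS hγ hL
  have := sum_odd_gaps_card_pos_lt_add hS.1 hL hF.2
  omega

theorem card_filter_odd_mem_le (hS : IsNumericalSemigroup S) (hγ : GammaHyperelliptic γ S)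
    (hL : ∀ x, x ∈ L ↔ x ∉ S) {F : ℕ} (hF : IsGreatest Sᶜ F) :
    #{x ∈ range F | ¬Even x ∧ x ∈ S} ≤ γ := by
  rw [← card_filter_even hS hγ hL]
  exact card_le_card_of_sub_mem (fun x hx => (mem_range.mp (mem_filter.mp hx).1).le)
    (sub_mem_filter_even hS hL hF.1 (not_even_of_isGreatest hS hγ hF))

theorem genus_eq_add_card_filter_odd (hS : IsNumericalSemigroup S)
    (hγ : GammaHyperelliptic γ S) (hL : ∀ x, x ∈ L ↔ x ∉ S) :
    genus S = γ + #{x ∈ L | ¬Even x} := by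
  rw [genus_eq_card hL, ← card_filter_even hS hγ hL, card_filter_add_card_filter_not]

theorem Kweight_add_le (hS : IsNumericalSemigroup S) (hγ : GammaHyperelliptic γ S)
    (hL : ∀ x, x ∈ L ↔ x ∉ S) {F : ℕ} (hF : IsGreatest Sᶜ F) :
    Kweight S + γ * #{x ∈ L | ¬Even x} + 2 * (#{x ∈ range F | ¬Even x ∧ x ∈ S}).choose 2 +
        2 * #{x ∈ range F | ¬Even x ∧ x ∈ S} ≤
      3 * γ.choose 2 + (#{x ∈ L | ¬Even x}).choose 2 + 3 * γ +
        2 * (#{x ∈ range F | ¬Even x ∧ x ∈ S} * γ) := by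
  have hK := Kweight_add_eq hS.1 hS.2.2 hF
  have hF1 := add_one_eq_two_mul_card_odd hL hF (not_even_of_isGreatest hS hγ hF)
  have hW := sum_card_pos_lt_add_le hS hγ hL hF
  have hg := genus_eq_add_card_filter_odd hS hγ hL
  rw [Sweight_eq_sum hS.1 hL] at hK
  omega

end GammaHyperelliptic

theorem Kweight_upper_bound (γ g : ℕ) (S : Set ℕ)
    (hS : IsNumericalSemigroup S) (hγ : GammaHyperelliptic γ S)
    (hg : genus S = g) (hgen : 2 * γ + 1 ≤ g) :
    Kweight S ≤ Nat.choose (g - 2 * γ) 2 + 2 * γ ^ 2 := by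
  obtain ⟨L, hL⟩ : ∃ L : Finset ℕ, ∀ x, x ∈ L ↔ x ∉ S :=
    ⟨hS.2.2.toFinset, fun x => hS.2.2.mem_toFinset⟩
  have hF := isGreatest_gap_genus_sub_one hS.2.2 (by omega)
  have hK := GammaHyperelliptic.Kweight_add_le hS hγ hL hF
  have hR := GammaHyperelliptic.card_filter_odd_mem_le hS hγ hL hF
  have hgo := GammaHyperelliptic.genus_eq_add_card_filter_odd hS hγ hL
  have := three_mul_choose_two_add_choose_two_le hR (show γ ≤ #{x ∈ L | ¬Even x} by omega)
  rw [show g - 2 * γ = #{x ∈ L | ¬Even x} - γ by omega]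
  omega
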